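/- arXiv:2006.09492 — 4 statements merged into one kernel-verified Lean document; each statement's English description precedes it below -/
import Mathlib

section
/- For n ≥ 2 and 1 ≤ k ≤ n−1, the cone D_{n,k} = {v ∈ ℝ^n : v_1 = … = v_k, −k·v_1 ≥ Σ_{j=k+1}^n |v_j|} equals the positive hull of the 2(n−k) vectors u_i^± := −(e_1+…+e_k) ± k·e_{k+i}, for i = 1,…,n−k. -/
/-!
The combination `∑ aᵢ uᵢ⁺ + ∑ bᵢ uᵢ⁻` has the value `-∑ (aᵢ + bᵢ)` on each of the first `k`
coordinates and `k (aᵢ - bᵢ)` on coordinate `k + i`. Since `|aᵢ - bᵢ| ≤ aᵢ + bᵢ` for nonnegative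
coefficients, the positive hull lies in the cone. Conversely, for `v` in the cone take `aᵢ, bᵢ`
from the positive and negative parts of `v_{k+i} / k`; this leaves the slack
`(-k v₁ - ∑ |v_{k+i}|) / (2k) ≥ 0`, which is added to one coordinate of both `a` and `b`.
-/

open Finset

theorem Fin.sum_ite_le_eq_sum_tail {M : Type*} [AddCommMonoid M] {n k : ℕ} (hkn : k ≤ n)
    (g : Fin n → M) :
    ∑ j : Fin n, (if k ≤ (j : ℕ) then g j else 0) = ∑ i : Fin (n - k), g ⟨k + i, by omega⟩ := by
  rw [← Finset.sum_filter]
  refine Finset.sum_bij' (fun j hj => ⟨j - k, by simp at hj; omega⟩) (fun i _ => ⟨k + i, by omega⟩)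
    ?_ ?_ ?_ ?_ ?_ <;> simp only [mem_filter, mem_univ, true_and, Fin.ext_iff] <;> intro j hj
  all_goals first | trivial | omega | exact congrArg g (Fin.ext (by simp only; omega))

theorem Fin.funext_head_tail {α : Type*} {n k : ℕ} {v w : Fin n → α} (hkn : k ≤ n)
    (head : ∀ j : Fin n, (j : ℕ) < k → v j = w j)
    (tail : ∀ i : Fin (n - k), v ⟨k + i, by omega⟩ = w ⟨k + i, by omega⟩) : v = w := by
  funext j
  by_cases hj : (j : ℕ) < k
  · exact head j hj
  · simpa [show k + (j - k) = (j : ℕ) by omega] using tail ⟨j - k, by omega⟩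

theorem exists_nonneg_sub_eq_of_sum_abs_le {ι : Type*} [Fintype ι] [Nonempty ι] {K c : ℝ}
    (hK : 0 < K) (w : ι → ℝ) (hw : ∑ i, |w i| ≤ -(K * c)) :
    ∃ a b : ι → ℝ, (∀ i, 0 ≤ a i) ∧ (∀ i, 0 ≤ b i) ∧
      ∑ i, (a i + b i) = -c ∧ ∀ i, K * (a i - b i) = w i := by
  classical
  obtain ⟨i₀⟩ := ‹Nonempty ι›
  set t := (-(K * c) - ∑ i, |w i|) / (2 * K)
  have ht : 0 ≤ t := div_nonneg (by linarith) (by positivity)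
  have hpos (i : ι) : 0 ≤ |w i| + w i := by linarith [neg_abs_le (w i)]
  have hneg (i : ι) : 0 ≤ |w i| - w i := by linarith [le_abs_self (w i)]
  refine ⟨fun i => (|w i| + w i) / (2 * K) + if i = i₀ then t else 0,
    fun i => (|w i| - w i) / (2 * K) + if i = i₀ then t else 0,
    fun i => by have := hpos i; dsimp only; split_ifs <;> positivity,
    fun i => by have := hneg i; dsimp only; split_ifs <;> positivity, ?_, fun i => by field_simp; ring⟩
  simp only [sum_add_distrib, sum_sub_distrib, sum_ite_eq', mem_univ, if_true, ← sum_div, t]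
  field_simp
  ring

/-- `-(e₀ + ⋯ + e_{k-1}) + s • e_{k+i}`; with coordinates indexed from `0`,
`coneGenerator n k (±k) i` is the paper's `u_{i+1}^±`. -/
def coneGenerator (n k : ℕ) (s : ℝ) (i : ℕ) : Fin n → ℝ :=
  fun j => (if (j : ℕ) < k then (-1 : ℝ) else 0) + (if (j : ℕ) = k + i then s else 0)

def coneCombination {m : ℕ} (n k : ℕ) (a b : Fin m → ℝ) : Fin n → ℝ :=
  ∑ i, a i • coneGenerator n k k i + ∑ i, b i • coneGenerator n k (-k) i

section coneCombination

variable {m n k : ℕ} (a b : Fin m → ℝ)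

theorem sum_smul_coneGenerator_apply_of_lt (s : ℝ) {j : Fin n} (hj : (j : ℕ) < k) :
    (∑ i, a i • coneGenerator n k s i) j = -∑ i, a i := by
  simp [coneGenerator, Finset.sum_apply, hj, show ∀ i : ℕ, (j : ℕ) ≠ k + i by omega]

theorem sum_smul_coneGenerator_apply_add (s : ℝ) (i : Fin m) (h : k + i < n) :
    (∑ i, a i • coneGenerator n k s i) ⟨k + i, h⟩ = a i * s := by
  rw [Finset.sum_apply, Finset.sum_eq_single i]
  · simp [coneGenerator]
  · intro i' _ hi'
    simp [coneGenerator, Fin.val_ne_of_ne hi'.symm]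
  · simp

theorem coneCombination_apply_of_lt {j : Fin n} (hj : (j : ℕ) < k) :
    coneCombination n k a b j = -∑ i, (a i + b i) := by
  simp only [coneCombination, Pi.add_apply, sum_smul_coneGenerator_apply_of_lt _ _ hj,
    sum_add_distrib]
  ring

theorem coneCombination_apply_add (i : Fin m) (h : k + i < n) :
    coneCombination n k a b ⟨k + i, h⟩ = k * (a i - b i) := by
  simp only [coneCombination, Pi.add_apply, sum_smul_coneGenerator_apply_add]
  ring

end coneCombination

/-- For `n ≥ 2` and `1 ≤ k ≤ n-1`, the cone
`D_{n,k} = {v ∈ ℝ^n : v_1 = … = v_k, -k v_1 ≥ Σ_{j=k+1}^n |v_j|}` equals the positive hull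
of the `2(n-k)` vectors `u_i^± = -(e_1 + … + e_k) ± k e_{k+i}`, `i = 1, …, n-k`. -/
theorem stmt6 (n k : ℕ) (hk : 1 ≤ k) (hkn : k ≤ n - 1) :
    {v : Fin n → ℝ | (∀ i : Fin n, (i : ℕ) < k → v i = v ⟨0, by omega⟩) ∧
      ∑ j : Fin n, (if k ≤ (j : ℕ) then |v j| else 0) ≤ -((k : ℝ) * v ⟨0, by omega⟩)}
    = {v : Fin n → ℝ | ∃ a b : Fin (n - k) → ℝ, (∀ i, 0 ≤ a i) ∧ (∀ i, 0 ≤ b i) ∧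
      v = ∑ i, a i • (fun j : Fin n =>
            (if (j : ℕ) < k then (-1 : ℝ) else 0) + (if (j : ℕ) = k + i then (k : ℝ) else 0))
        + ∑ i, b i • (fun j : Fin n =>
            (if (j : ℕ) < k then (-1 : ℝ) else 0) + (if (j : ℕ) = k + i then -(k : ℝ) else 0))} := by
  have hk₀ : (0 : ℕ) < k := hk
  have hkR : (0 : ℝ) < k := by exact_mod_cast hk
  ext v
  change (_ ∧ _) ↔ ∃ a b : Fin (n - k) → ℝ,
    (∀ i, 0 ≤ a i) ∧ (∀ i, 0 ≤ b i) ∧ v = coneCombination n k a b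
  rw [Fin.sum_ite_le_eq_sum_tail (by omega)]
  constructor
  · rintro ⟨hhead, hsum⟩
    have : Nonempty (Fin (n - k)) := ⟨⟨0, by omega⟩⟩
    obtain ⟨a, b, ha, hb, hmass, hdiff⟩ := exists_nonneg_sub_eq_of_sum_abs_le hkR _ hsum
    refine ⟨a, b, ha, hb, Fin.funext_head_tail (k := k) (by omega) (fun j hj => ?_) fun i => ?_⟩
    · rw [coneCombination_apply_of_lt a b hj, hmass, neg_neg, hhead j hj]
    · rw [coneCombination_apply_add, hdiff]
  · rintro ⟨a, b, ha, hb, rfl⟩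
    refine ⟨fun j hj => by rw [coneCombination_apply_of_lt a b hj,
      coneCombination_apply_of_lt a b hk₀], ?_⟩
    rw [coneCombination_apply_of_lt a b hk₀, mul_neg, neg_neg, mul_sum]
    refine sum_le_sum fun i _ => ?_
    rw [coneCombination_apply_add, abs_mul, Nat.abs_cast]
    gcongr
    exact abs_sub_le_iff.2 ⟨by linarith [hb i], by linarith [ha i]⟩
end

section
/- Let F be a (k−1)-dimensional face of the n-dimensional regular crosspolytope P_n = conv{±e_1,…,±e_n}, say F = conv{e_1,…,e_k} (1 ≤ k ≤ n). Then the tangent cone of P_n at F equals {v ∈ ℝ^n : −Σ_{i=1}^k v_i ≥ Σ_{i=k+1}^n |v_i|}. -/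
open Finset

/-!
Write `f` for the point that equals `a > 0` on the coordinates in `p` and `0` elsewhere. For
`ε ≥ 0`, `‖f + ε v‖₁ ≥ ‖f‖₁ + ε (∑_{p} v i + ∑_{¬p} |v i|)`, with equality as soon as `ε` is
small enough that `f + ε v` keeps the sign of `f` on `p`. Hence `f + ε v` stays in the `ℓ¹`-ball
of radius `‖f‖₁` for some `ε > 0` exactly when `∑_{¬p} |v i| ≤ -∑_{p} v i`. The centroid of
`conv{e_1, …, e_k}` is this point with `a = 1 / k` and `‖f‖₁ = 1`.
-/

section IndicatorPerturbation

variable {ι : Type*} [Fintype ι] (p : ι → Prop) [DecidablePred p] {a ε : ℝ}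

theorem abs_ite_add_mul_ge (P : Prop) [Decidable P] (ha : 0 ≤ a) (hε : 0 ≤ ε) (x : ℝ) :
    |if P then a else 0| + ε * (if P then x else 0) + ε * (if ¬P then |x| else 0)
      ≤ |(if P then a else 0) + ε * x| := by
  split_ifs <;> simp [abs_of_nonneg ha, abs_mul, abs_of_nonneg hε, le_abs_self]

theorem abs_ite_add_mul_eq (P : Prop) [Decidable P] (ha : 0 ≤ a) (hε : 0 ≤ ε) {x : ℝ}
    (hx : P → 0 ≤ a + ε * x) :
    |(if P then a else 0) + ε * x|
      = |if P then a else 0| + ε * (if P then x else 0) + ε * (if ¬P then |x| else 0) := by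
  split_ifs with hP
  · simp [abs_of_nonneg ha, abs_of_nonneg (hx hP)]
  · simp [abs_mul, abs_of_nonneg hε]

theorem sum_add_mul_add_mul (A B C : ι → ℝ) :
    ∑ i, (A i + ε * B i + ε * C i) = ∑ i, A i + ε * (∑ i, B i + ∑ i, C i) := by
  rw [sum_add_distrib, sum_add_distrib, ← mul_sum, ← mul_sum]
  ring

theorem sum_abs_ite_add_mul_ge (ha : 0 ≤ a) (hε : 0 ≤ ε) (v : ι → ℝ) :
    ∑ i, |if p i then a else 0|
        + ε * (∑ i, (if p i then v i else 0) + ∑ i, (if ¬p i then |v i| else 0))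
      ≤ ∑ i, |(if p i then a else 0) + ε * v i| := by
  rw [← sum_add_mul_add_mul]
  exact sum_le_sum fun i _ => abs_ite_add_mul_ge (p i) ha hε (v i)

theorem sum_abs_ite_add_mul_eq (ha : 0 ≤ a) (hε : 0 ≤ ε) {v : ι → ℝ}
    (hv : ∀ i, p i → 0 ≤ a + ε * v i) :
    ∑ i, |(if p i then a else 0) + ε * v i|
      = ∑ i, |if p i then a else 0|
        + ε * (∑ i, (if p i then v i else 0) + ∑ i, (if ¬p i then |v i| else 0)) := by
  rw [← sum_add_mul_add_mul]
  exact sum_congr rfl fun i _ => abs_ite_add_mul_eq (p i) ha hε (hv i)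

theorem exists_pos_forall_add_mul_nonneg (ha : 0 < a) (v : ι → ℝ) :
    ∃ ε > 0, ∀ i, 0 ≤ a + ε * v i := by
  set M := ∑ i, |v i|
  have hM : 0 ≤ M := sum_nonneg fun i _ => abs_nonneg _
  have hε : 0 < a / (1 + M) := by positivity
  refine ⟨a / (1 + M), hε, fun i => ?_⟩
  have hvi : |v i| ≤ M := single_le_sum (f := fun i => |v i|) (fun i _ => abs_nonneg _) (mem_univ i)
  have hstep : a / (1 + M) * |v i| ≤ a := by
    rw [div_mul_eq_mul_div, div_le_iff₀ (by positivity)]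
    nlinarith
  nlinarith [mul_le_mul_of_nonneg_left (neg_abs_le (v i)) hε.le]

theorem exists_pos_sum_abs_ite_add_mul_le_iff (ha : 0 < a) (v : ι → ℝ) :
    (∃ ε > 0, ∑ i, |(if p i then a else 0) + ε * v i| ≤ ∑ i, |if p i then a else 0|) ↔
      ∑ i, (if ¬p i then |v i| else 0) ≤ -∑ i, (if p i then v i else 0) := by
  constructor
  · rintro ⟨ε, hε, hle⟩
    have := (sum_abs_ite_add_mul_ge p ha.le hε.le v).trans hle
    nlinarith
  · intro h
    obtain ⟨ε, hε, hv⟩ := exists_pos_forall_add_mul_nonneg ha v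
    refine ⟨ε, hε, ?_⟩
    rw [sum_abs_ite_add_mul_eq p ha.le hε.le fun i _ => hv i]
    nlinarith

end IndicatorPerturbation

theorem sum_abs_centroid_eq_one {n k : ℕ} (hk : 1 ≤ k) (hkn : k ≤ n) :
    ∑ i : Fin n, |if (i : ℕ) < k then 1 / (k : ℝ) else 0| = 1 := by
  have hk0 : (k : ℝ) ≠ 0 := by positivity
  simp [apply_ite, sum_ite, Fin.card_filter_val_lt, min_eq_right hkn, hk0]

/-- Let `F = conv{e_1,…,e_k}` be a `(k-1)`-dimensional face of the crosspolytope
`P_n = {u : Σ|u_j| ≤ 1}`, and let `f` be its centroid, a relative interior point of `F`.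
Then the tangent cone of `P_n` at `F`, i.e. `{v : f + εv ∈ P_n for some ε > 0}`, equals
`{v : -Σ_{i=1}^k v_i ≥ Σ_{i=k+1}^n |v_i|}`. -/
theorem stmt8 (n k : ℕ) (hk : 1 ≤ k) (hkn : k ≤ n) :
    {v : Fin n → ℝ | ∃ ε : ℝ, 0 < ε ∧
      ((fun i : Fin n => if (i : ℕ) < k then 1 / (k : ℝ) else 0) + ε • v)
        ∈ {u : Fin n → ℝ | ∑ j, |u j| ≤ 1}}
    = {v : Fin n → ℝ |
        ∑ i : Fin n, (if k ≤ (i : ℕ) then |v i| else 0)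
          ≤ -∑ i : Fin n, (if (i : ℕ) < k then v i else 0)} := by
  ext v
  have ha : (0 : ℝ) < 1 / k := by positivity
  have key := exists_pos_sum_abs_ite_add_mul_le_iff (fun i : Fin n => (i : ℕ) < k) ha v
  simp only [sum_abs_centroid_eq_one hk hkn, not_lt] at key
  simpa only [Set.mem_ofPred_eq, Pi.add_apply, Pi.smul_apply, smul_eq_mul, exists_prop] using key
end

section
/- Every k-dimensional face of the cone C_n^□(σ²) is isometric to C^□_{k−1}(σ² + n − k + 1). Concretely: the vectors v_ε := σe_{n+1} + Σ_{i=1}^{k−1}ε_i e_i + Σ_{i=k}^n e_i, ε ∈ {−1,1}^{k−1}, spanning a k-face, have pairwise scalar products ⟨v_ε, v_η⟩ = σ² + ⟨ε,η⟩ + n − k + 1. -/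
open Finset Matrix

def sgn (b : Bool) : ℝ := if b then 1 else -1

/-- For `m = k - 1`, `a = sgn ∘ ε` and `s = σ` this is the generator
`v_ε = σ e_{n+1} + Σ_{i<k} ε_i e_i + Σ_{i=k}^n e_i` of a `k`-face of `C_n^□(σ²)`. -/
def faceVector {m : ℕ} (n : ℕ) (a : Fin m → ℝ) (s : ℝ) : Fin (n + 1) → ℝ :=
  fun j => if h : (j : ℕ) < m then a ⟨j, h⟩ else if (j : ℕ) = n then s else 1

lemma sum_dite_lt_else_one {m n : ℕ} (hmn : m ≤ n) (c : Fin m → ℝ) :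
    ∑ j : Fin n, (if h : (j : ℕ) < m then c ⟨j, h⟩ else 1) = ∑ i, c i + (n - m : ℕ) := by
  let f : ℕ → ℝ := fun j => if h : j < m then c ⟨j, h⟩ else 1
  rw [Fin.sum_univ_eq_sum_range f, ← sum_range_add_sum_Ico f hmn,
    ← Fin.sum_univ_eq_sum_range f]
  congr 1
  · exact sum_congr rfl fun i _ => dif_pos i.isLt
  · rw [sum_congr rfl fun j hj => dif_neg (not_lt.mpr (mem_Ico.mp hj).1)]
    simp

lemma faceVector_mul_castSucc {m n : ℕ} (a b : Fin m → ℝ) (s t : ℝ) (j : Fin n) :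
    faceVector n a s j.castSucc * faceVector n b t j.castSucc =
      if h : (j : ℕ) < m then a ⟨j, h⟩ * b ⟨j, h⟩ else 1 := by
  by_cases h : (j : ℕ) < m <;> simp [faceVector, h, j.isLt.ne]

lemma faceVector_last {m n : ℕ} (hmn : m ≤ n) (a : Fin m → ℝ) (s : ℝ) :
    faceVector n a s (Fin.last n) = s := by
  simp [faceVector, hmn]

lemma dotProduct_faceVector {m n : ℕ} (hmn : m ≤ n) (a b : Fin m → ℝ) (s t : ℝ) :
    faceVector n a s ⬝ᵥ faceVector n b t = s * t + ∑ i, a i * b i + (n - m : ℕ) := by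
  rw [dotProduct, Fin.sum_univ_castSucc]
  simp only [faceVector_mul_castSucc, faceVector_last hmn]
  rw [sum_dite_lt_else_one hmn fun i => a i * b i]
  ring

theorem stmt13_general (n k : ℕ) (hk : 1 ≤ k) (hkn : k ≤ n + 1) (σ : ℝ) :
    ∀ ε η : Fin (k - 1) → Bool,
      (fun j : Fin (n + 1) => if h : (j : ℕ) < k - 1 then sgn (ε ⟨(j : ℕ), h⟩)
          else if (j : ℕ) = n then σ else 1)
        ⬝ᵥ (fun j : Fin (n + 1) => if h : (j : ℕ) < k - 1 then sgn (η ⟨(j : ℕ), h⟩)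
          else if (j : ℕ) = n then σ else 1)
      = σ ^ 2 + (∑ i : Fin (k - 1), sgn (ε i) * sgn (η i)) + ((n : ℝ) - k + 1) := by
  intro ε η
  change faceVector n (sgn ∘ ε) σ ⬝ᵥ faceVector n (sgn ∘ η) σ = _
  rw [dotProduct_faceVector (by omega), Nat.cast_sub (by omega), Nat.cast_sub hk]
  push_cast [Function.comp_apply]
  ring

/-- The vectors `v_ε = σ e_{n+1} + Σ_{i=1}^{k-1} ε_i e_i + Σ_{i=k}^n e_i`, `ε ∈ {-1,1}^{k-1}`,
spanning a `k`-dimensional face of `C_n^□(σ²)`, have pairwise scalar products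
`⟨v_ε, v_η⟩ = σ² + ⟨ε,η⟩ + n - k + 1`; hence (having the same Gram matrix as the spanning
vectors of `C^□_{k-1}(σ² + n - k + 1)`) every `k`-face of `C_n^□(σ²)` is isometric to
`C^□_{k-1}(σ² + n - k + 1)`. -/
theorem stmt13 (n k : ℕ) (hk : 1 ≤ k) (hkn : k ≤ n + 1) (σ : ℝ) (hσ : 0 < σ) :
    ∀ ε η : Fin (k - 1) → Bool,
      (fun j : Fin (n + 1) => if h : (j : ℕ) < k - 1 then sgn (ε ⟨(j : ℕ), h⟩)
          else if (j : ℕ) = n then σ else 1)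
        ⬝ᵥ (fun j : Fin (n + 1) => if h : (j : ℕ) < k - 1 then sgn (η ⟨(j : ℕ), h⟩)
          else if (j : ℕ) = n then σ else 1)
      = σ ^ 2 + (∑ i : Fin (k - 1), sgn (ε i) * sgn (η i)) + ((n : ℝ) - k + 1) :=
  stmt13_general n k hk hkn σ
end

section
/- Let Q ⊂ ℝ^n be a full-dimensional polyhedron (finite intersection of closed half-spaces) and S ⊂ ℝ^n a linear subspace of codimension l ∈ {1,…,n−1} in general position with respect to the affine hulls of all faces of Q. If S ∩ Q ≠ ∅, then S ∩ int(Q) ≠ ∅. -/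
/-!
If `S` missed `int Q`, Hahn–Banach would give a nonzero functional `f` that is constant on `S` and
attains its maximum over `Q` at a point `x ∈ S ∩ Q`. Then `S` and the affine hull of the exposed
face `F = argmax_Q f` both lie in the hyperplane `f = f x`. General position rules this out:
as `x ∈ S ∩ aff F`, it forces `dim (S ∩ aff F) = dim aff F - l`, which together with
`codim S = l` says that the directions of `S` and `aff F` span the whole space.
-/

open Finset Matrix

variable {V : Type*} [AddCommGroup V] [Module ℝ V]

/-- Dimension of an affine subspace: the rank of its direction. -/
noncomputable def adim (A : AffineSubspace ℝ V) : ℕ := Module.finrank ℝ A.direction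

/-- `S` (of codimension `l`) is in general position with respect to the affine subspace `A`:
if `A` is nonempty, then `S ∩ A` is empty when `dim A < l`, and is nonempty of dimension
`dim A − l` otherwise. -/
def GenPos (l : ℕ) (S A : AffineSubspace ℝ V) : Prop :=
  (A : Set V).Nonempty →
    ((adim A < l → S ⊓ A = ⊥) ∧
     (l ≤ adim A → S ⊓ A ≠ ⊥ ∧ adim (S ⊓ A) = adim A - l))

theorem convex_setOf_forall_dotProduct_le {n : ℕ} {ι : Type*} (v : ι → Fin n → ℝ) (c : ι → ℝ) :
    Convex ℝ {x : Fin n → ℝ | ∀ i, v i ⬝ᵥ x ≤ c i} := by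
  simp only [Set.ofPred_forall]
  exact convex_iInter fun i => convex_halfSpace_le (dotProductBilin ℝ ℝ (v i)).isLinear (c i)

theorem vectorSpan_le_ker_of_forall_eq {k E : Type*} [Ring k] [AddCommGroup E] [Module k E]
    {M : Type*} [AddCommGroup M] [Module k M] (f : E →ₗ[k] M) {s : Set E} {c : M}
    (hs : ∀ p ∈ s, f p = c) : vectorSpan k s ≤ LinearMap.ker f := by
  rw [vectorSpan_def, Submodule.span_le]
  rintro _ ⟨p, hp, q, hq, rfl⟩
  simp [hs p hp, hs q hq]

theorem AffineSubspace.apply_eq_of_forall_le_apply {E : Type*} [AddCommGroup E] [Module ℝ E]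
    {S : AffineSubspace ℝ E} (f : E →ₗ[ℝ] ℝ) {u : ℝ} (hf : ∀ s ∈ S, u ≤ f s) {x y : E}
    (hx : x ∈ S) (hy : y ∈ S) : f y = f x := by
  by_contra hne
  have hline (t : ℝ) : f (AffineMap.lineMap x y t) = f x + t * (f y - f x) := by
    simp only [AffineMap.lineMap_apply_module, map_add, map_smul, smul_eq_mul]
    ring
  have key := hf _ (AffineMap.lineMap_mem ((u - f x - 1) / (f y - f x)) hx hy)
  rw [hline, div_mul_cancel₀ _ (sub_ne_zero.2 hne)] at key
  linarith

theorem GenPos.direction_sup_eq_top {E : Type*} [AddCommGroup E] [Module ℝ E]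
    [FiniteDimensional ℝ E] {l : ℕ} {S A : AffineSubspace ℝ E} (h : GenPos l S A) {x : E}
    (hxS : x ∈ S) (hxA : x ∈ A) (hS : adim S = Module.finrank ℝ E - l) :
    S.direction ⊔ A.direction = ⊤ := by
  have hxSA : x ∈ S ⊓ A := ⟨hxS, hxA⟩
  obtain ⟨hsmall, hlarge⟩ := h ⟨x, hxA⟩
  have hlA : l ≤ adim A := by
    by_contra hlt
    rw [hsmall (not_le.1 hlt)] at hxSA
    exact AffineSubspace.notMem_bot ℝ E x hxSA
  have hinf : Module.finrank ℝ ↥(S.direction ⊓ A.direction) = adim A - l := by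
    rw [← AffineSubspace.direction_inf_of_mem hxS hxA]
    exact (hlarge hlA).2
  have hsum := Submodule.finrank_sup_add_finrank_inf_eq S.direction A.direction
  have hsup_le := Submodule.finrank_le (S.direction ⊔ A.direction)
  have hA_le := Submodule.finrank_le A.direction
  unfold adim at hS hlA hinf
  apply Submodule.eq_top_of_finrank_eq
  omega

theorem Convex.exists_supporting_functional_const_on_of_disjoint_interior {E : Type*}
    [TopologicalSpace E] [AddCommGroup E] [Module ℝ E] [IsTopologicalAddGroup E]
    [ContinuousSMul ℝ E] {Q : Set E} (hQ : Convex ℝ Q) (hQint : (interior Q).Nonempty)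
    {S : AffineSubspace ℝ E} (hdisj : Disjoint (interior Q) S) {x : E} (hxS : x ∈ S) :
    ∃ f : StrongDual ℝ E, f ≠ 0 ∧ (∀ y ∈ Q, f y ≤ f x) ∧ ∀ s ∈ S, f s = f x := by
  obtain ⟨f, u, hf0, hfQ, hfS⟩ :=
    geometric_hahn_banach_of_nonempty_interior hQ S.convex hdisj hQint ⟨x, hxS⟩
  refine ⟨f, hf0, fun y hy => (hfQ y hy).trans (hfS x hxS), fun s hs => ?_⟩
  exact AffineSubspace.apply_eq_of_forall_le_apply (f : E →ₗ[ℝ] ℝ) hfS hxS hs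

theorem stmt18_general (n l : ℕ)
    (Q : Set (Fin n → ℝ))
    (hQ : ∃ (m : ℕ) (v : Fin m → (Fin n → ℝ)) (c : Fin m → ℝ),
      Q = {x : Fin n → ℝ | ∀ i, v i ⬝ᵥ x ≤ c i})
    (hQdim : affineSpan ℝ Q = ⊤)
    (S : AffineSubspace ℝ (Fin n → ℝ))
    (hSdim : adim S = n - l)
    (hgp : ∀ F : Set (Fin n → ℝ), IsExposed ℝ Q F → GenPos l S (affineSpan ℝ F))
    (hSQ : ((S : Set (Fin n → ℝ)) ∩ Q).Nonempty) :
    ((S : Set (Fin n → ℝ)) ∩ interior Q).Nonempty := by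
  have hconv : Convex ℝ Q := by
    obtain ⟨m, v, c, rfl⟩ := hQ
    exact convex_setOf_forall_dotProduct_le v c
  obtain ⟨x, hxS, hxQ⟩ := hSQ
  by_contra hdisj
  rw [Set.not_nonempty_iff_eq_empty, Set.inter_comm, ← Set.disjoint_iff_inter_eq_empty] at hdisj
  obtain ⟨f, hf0, hfQ, hfS⟩ := hconv.exists_supporting_functional_const_on_of_disjoint_interior
    (hconv.interior_nonempty_iff_affineSpan_eq_top.2 hQdim) hdisj hxS
  set F := f.toExposed Q
  have hxF : x ∈ F := ⟨hxQ, hfQ⟩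
  have hfF : ∀ y ∈ F, f y = f x := fun y hy => le_antisymm (hfQ y hy.1) (hy.2 x hxQ)
  have htop : S.direction ⊔ (affineSpan ℝ F).direction = ⊤ :=
    (hgp F ContinuousLinearMap.toExposed.isExposed).direction_sup_eq_top hxS
      (subset_affineSpan ℝ F hxF) (by rw [hSdim, Module.finrank_fin_fun])
  have hker : S.direction ⊔ (affineSpan ℝ F).direction ≤ LinearMap.ker (f : _ →ₗ[ℝ] ℝ) :=
    sup_le (S.direction_eq_vectorSpan ▸ vectorSpan_le_ker_of_forall_eq _ hfS)
      (direction_affineSpan ℝ F ▸ vectorSpan_le_ker_of_forall_eq _ hfF)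
  rw [htop, top_le_iff, LinearMap.ker_eq_top] at hker
  exact hf0 (ContinuousLinearMap.coe_injective hker)

/-- Let `Q ⊂ ℝ^n` be a full-dimensional polyhedron (a finite intersection of closed
half-spaces) and `S` a linear subspace of codimension `l ∈ {1,…,n−1}` in general position with
respect to the affine hulls of all faces of `Q`. If `S ∩ Q ≠ ∅`, then `S ∩ int(Q) ≠ ∅`. -/
theorem stmt18 (n l : ℕ) (hl1 : 1 ≤ l) (hln : l ≤ n - 1)
    (Q : Set (Fin n → ℝ))
    (hQ : ∃ (m : ℕ) (v : Fin m → (Fin n → ℝ)) (c : Fin m → ℝ),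
      Q = {x : Fin n → ℝ | ∀ i, v i ⬝ᵥ x ≤ c i})
    (hQdim : affineSpan ℝ Q = ⊤)
    (S : AffineSubspace ℝ (Fin n → ℝ)) (hS0 : (0 : Fin n → ℝ) ∈ S)
    (hSdim : adim S = n - l)
    (hgp : ∀ F : Set (Fin n → ℝ), IsExposed ℝ Q F → GenPos l S (affineSpan ℝ F))
    (hSQ : ((S : Set (Fin n → ℝ)) ∩ Q).Nonempty) :
    ((S : Set (Fin n → ℝ)) ∩ interior Q).Nonempty :=
  stmt18_general n l Q hQ hQdim S hSdim hgp hSQ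
end
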